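/- For integers m, n > 2, F(C_m ⊠ C_n) ≥ ⌈mn/2⌉, where ⊠ denotes the strong product. -/

import Mathlib

namespace ZeroForcing

/-- One step of the zero forcing process: all vertices forced from blue set `S`
(a blue vertex with exactly one white neighbor forces that neighbor). -/
def step {V : Type*} (G : SimpleGraph V) (S : Set V) : Set V :=
  S ∪ {v | ∃ u ∈ S, G.Adj u v ∧ ∀ w, G.Adj u w → w ∉ S → w = v}

/-- `S` is a zero forcing set: iterating the color-change rule makes everything blue. -/
def IsZeroForcingSet {V : Type*} (G : SimpleGraph V) (S : Set V) : Prop :=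
  ∃ k, (step G)^[k] S = Set.univ

/-- `S` is a failed zero forcing set. -/
def IsFailedSet {V : Type*} (G : SimpleGraph V) (S : Set V) : Prop :=
  ¬ IsZeroForcingSet G S

/-- The zero forcing number `Z(G)`. -/
noncomputable def Z {V : Type*} (G : SimpleGraph V) : ℕ :=
  sInf {k | ∃ S : Set V, S.ncard = k ∧ IsZeroForcingSet G S}

/-- The failed zero forcing number `F(G)`. -/
noncomputable def F {V : Type*} (G : SimpleGraph V) : ℕ :=
  sSup {k | ∃ S : Set V, S.ncard = k ∧ IsFailedSet G S}

/-- The strong product of two simple graphs. -/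
def strongProd {α β : Type*} (G : SimpleGraph α) (H : SimpleGraph β) :
    SimpleGraph (α × β) where
  Adj x y := x ≠ y ∧ (x.1 = y.1 ∨ G.Adj x.1 y.1) ∧ (x.2 = y.2 ∨ H.Adj x.2 y.2)
  symm := by
    constructor
    rintro x y ⟨h1, h2, h3⟩
    exact ⟨h1.symm, h2.imp Eq.symm (fun h => G.adj_symm h), h3.imp Eq.symm (fun h => H.adj_symm h)⟩
  loopless := ⟨fun x h => h.1 rfl⟩

/-- The lexicographic product of two simple graphs. -/
def lexProd {α β : Type*} (G : SimpleGraph α) (H : SimpleGraph β) :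
    SimpleGraph (α × β) where
  Adj x y := G.Adj x.1 y.1 ∨ (x.1 = y.1 ∧ H.Adj x.2 y.2)
  symm := by
    constructor
    rintro x y (h | ⟨h1, h2⟩)
    · exact Or.inl h.symm
    · exact Or.inr ⟨h1.symm, h2.symm⟩
  loopless := by
    constructor
    rintro x (h | ⟨h1, h2⟩)
    · exact G.loopless.irrefl _ h
    · exact H.loopless.irrefl _ h2

/-- The corona `G ∘ H`: one copy of `G` and, for each vertex `a` of `G`, a copy of `H`
all of whose vertices are joined to `a`. -/
def corona {α β : Type*} (G : SimpleGraph α) (H : SimpleGraph β) :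
    SimpleGraph (α ⊕ α × β) where
  Adj x y :=
    match x, y with
    | .inl a, .inl a' => G.Adj a a'
    | .inl a, .inr p => a = p.1
    | .inr p, .inl a' => p.1 = a'
    | .inr p, .inr q => p.1 = q.1 ∧ H.Adj p.2 q.2
  symm := by
    constructor
    rintro (a | p) (a' | q) h
    · exact G.adj_symm h
    · exact h.symm
    · exact h.symm
    · exact ⟨h.1.symm, H.adj_symm h.2⟩
  loopless := by
    constructor
    rintro (a | p) h
    · exact G.loopless.irrefl _ h
    · exact H.loopless.irrefl _ h.2

end ZeroForcing

/-
A strong product `G ⊠ H` of graphs without isolated vertices has a large failed zero forcing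
set: colour blue every vertex outside one fibre `G × {b}`. A blue vertex `(a, j)` with a white
neighbour has `H.Adj j b`, so it sees both `(a, b)` and `(a', b)` for any neighbour `a'` of `a`;
having two white neighbours it cannot force, and the process stalls at once. For cycles this
set has `m (n - 1) ≥ ⌈mn/2⌉` vertices.
-/

theorem SimpleGraph.cycleGraph_adj_add_one {n : ℕ} (v : Fin (n + 2)) :
    (cycleGraph (n + 2)).Adj v (v + 1) :=
  cycleGraph_adj.2 (Or.inr (add_sub_cancel_left v 1))

namespace ZeroForcing

section Forcing

variable {V : Type*} {G : SimpleGraph V} {S : Set V}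

theorem step_eq_self_of_exists_other_white
    (h : ∀ u ∈ S, ∀ v, G.Adj u v → v ∉ S → ∃ w ≠ v, G.Adj u w ∧ w ∉ S) :
    step G S = S := by
  refine Set.Subset.antisymm ?_ Set.subset_union_left
  rintro v (hv | ⟨u, hu, huv, hforce⟩)
  · exact hv
  · by_contra hv
    obtain ⟨w, hwv, huw, hw⟩ := h u hu v huv hv
    exact hwv (hforce w huw hw)

theorem isFailedSet_of_step_eq_self (h : step G S = S) (hS : S ≠ Set.univ) :
    IsFailedSet G S := by
  rintro ⟨k, hk⟩
  exact hS (Function.iterate_fixed h k ▸ hk)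

theorem ncard_le_F [Finite V] (h : IsFailedSet G S) : S.ncard ≤ F G := by
  refine le_csSup ⟨Nat.card V, ?_⟩ ⟨S, rfl, h⟩
  rintro k ⟨T, rfl, -⟩
  exact Set.ncard_le_card T

end Forcing

theorem isFailedSet_strongProd_setOf_snd_ne {α β : Type*} [Nonempty α]
    {G : SimpleGraph α} {H : SimpleGraph β} (hG : ∀ a, ∃ a', G.Adj a a') (b : β) :
    IsFailedSet (strongProd G H) {p | p.2 ≠ b} := by
  refine isFailedSet_of_step_eq_self (step_eq_self_of_exists_other_white ?_) ?_
  · rintro u (hu : u.2 ≠ b) v huv (hv : ¬v.2 ≠ b)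
    rw [not_not] at hv
    have hub : H.Adj u.2 b := hv ▸ huv.2.2.resolve_left (hv ▸ hu)
    have hne : ∀ a : α, u ≠ (a, b) := fun a h => hu (congrArg Prod.snd h)
    obtain ⟨a', ha'⟩ := hG u.1
    by_cases hva : v = (u.1, b)
    · refine ⟨(a', b), fun h => ha'.ne ?_, ⟨hne a', Or.inr ha', Or.inr hub⟩, not_not.2 rfl⟩
      exact (congrArg Prod.fst (h.trans hva)).symm
    · exact ⟨(u.1, b), Ne.symm hva, ⟨hne u.1, Or.inl rfl, Or.inr hub⟩, not_not.2 rfl⟩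
  · exact fun h => Set.eq_univ_iff_forall.1 h (Classical.arbitrary α, b) rfl

theorem ncard_setOf_snd_ne {α β : Type*} [Finite α] [Finite β] (b : β) :
    {p : α × β | p.2 ≠ b}.ncard = Nat.card α * (Nat.card β - 1) := by
  have : {p : α × β | p.2 ≠ b} = Set.univ ×ˢ {b}ᶜ := by ext; simp
  rw [this, Set.ncard_prod, Set.ncard_univ, Set.ncard_compl, Set.ncard_singleton]

end ZeroForcing

theorem failed_zf_strong_cycles_lower (m n : ℕ) (hm : 2 < m) (hn : 2 < n) :
    (m * n + 1) / 2 ≤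
      ZeroForcing.F
        (ZeroForcing.strongProd (SimpleGraph.cycleGraph m) (SimpleGraph.cycleGraph n)) := by
  obtain ⟨m, rfl⟩ : ∃ k, m = k + 2 := ⟨m - 2, by omega⟩
  obtain ⟨n, rfl⟩ : ∃ k, n = k + 1 := ⟨n - 1, by omega⟩
  have hfail := ZeroForcing.isFailedSet_strongProd_setOf_snd_ne
    (G := SimpleGraph.cycleGraph (m + 2)) (H := SimpleGraph.cycleGraph (n + 1))
    (fun a => ⟨a + 1, SimpleGraph.cycleGraph_adj_add_one a⟩) 0
  calc ((m + 2) * (n + 1) + 1) / 2 ≤ (m + 2) * n := Nat.div_le_of_le_mul (by nlinarith)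
    _ = {p : Fin (m + 2) × Fin (n + 1) | p.2 ≠ 0}.ncard := by
      simp [ZeroForcing.ncard_setOf_snd_ne]
    _ ≤ _ := ZeroForcing.ncard_le_F hfail
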